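/- arXiv:1206.1935 — 2 statements merged into one kernel-verified Lean document; each statement's English description precedes it below -/
import Mathlib

section
/- Let P = ({E_k : k ∈ K}, {M_0, M_1}) be a concurrent quantum program on ℂ^d with input a partial density operator ρ_0, and let F = ∑_{k∈K} F_k. For each n ≥ 0 set Y_n = supp(∑_{i=0}^{n} F^i(ρ_0)). Then the increasing chain Y_0 ⊆ Y_1 ⊆ ⋯ stabilizes by step d−1: Y_n = Y_{d−1} for all n ≥ d−1. -/
open Matrix
open scoped ComplexOrder

/-- The support of a matrix `ρ`, i.e. the range (column space) of `ρ`. -/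
noncomputable def matSupp {d : ℕ} (ρ : Matrix (Fin d) (Fin d) ℂ) :
    Submodule ℂ (Fin d → ℂ) :=
  LinearMap.range ρ.mulVecLin

/-- The super-operator `F_k(ρ) = E_k(M₁ ρ M₁ᴴ)` of process `k`, where the
super-operator `E_k` has Kraus operators `E k i`. -/
noncomputable def progF {d m n : ℕ} (E : Fin m → Fin n → Matrix (Fin d) (Fin d) ℂ)
    (M₁ : Matrix (Fin d) (Fin d) ℂ) (k : Fin m)
    (ρ : Matrix (Fin d) (Fin d) ℂ) : Matrix (Fin d) (Fin d) ℂ :=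
  ∑ i, E k i * (M₁ * ρ * M₁ᴴ) * (E k i)ᴴ

/-- For a finite string `f = s₁s₂⋯sₙ`, the super-operator
`F_f = F_{sₙ} ∘ ⋯ ∘ F_{s₂} ∘ F_{s₁}` (the identity for the empty string). -/
noncomputable def progFStr {d m n : ℕ} (E : Fin m → Fin n → Matrix (Fin d) (Fin d) ℂ)
    (M₁ : Matrix (Fin d) (Fin d) ℂ) :
    List (Fin m) → Matrix (Fin d) (Fin d) ℂ → Matrix (Fin d) (Fin d) ℂ
  | [], ρ => ρ
  | k :: f, ρ => progFStr E M₁ f (progF E M₁ k ρ)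

/-!
For positive semidefinite `ρ`, `σ` and any `A`, writing `ρ = B†B` gives
`supp (ρ + σ) = supp ρ ⊔ supp σ` and `supp (A ρ A†) = A (supp ρ)`. As `F` is additive, the partial
sums satisfy `S_{N+1} = ρ₀ + F S_N`, so `Y_N = supp S_{N+1}` is the `(N+1)`-st iterate, starting
from `⊥`, of the monotone map `X ↦ supp ρ₀ ⊔ ⨆_{k,i} E_{k,i} M₁ X`. Such iterates form an
increasing chain of subspaces of `ℂ^d`, which can grow strictly at most `d` times; once two
consecutive terms agree the chain is constant.
-/

section FiniteDimensional

variable {K V : Type*} [DivisionRing K] [AddCommGroup V] [Module K V] [FiniteDimensional K V]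
  {f : Submodule K V → Submodule K V}

theorem Monotone.exists_le_finrank_iterate_bot_succ_eq (hf : Monotone f) :
    ∃ k ≤ Module.finrank K V, f^[k + 1] ⊥ = f^[k] ⊥ := by
  by_contra! h
  have hmono := hf.monotone_iterate_of_le_map (bot_le : ⊥ ≤ f ⊥)
  have hgrow : ∀ k ≤ Module.finrank K V + 1, k ≤ Module.finrank K (f^[k] ⊥) := by
    intro k hk
    induction k with
    | zero => exact Nat.zero_le _
    | succ k ih =>
      have hlt : f^[k] ⊥ < f^[k + 1] ⊥ := (hmono k.le_succ).lt_of_ne (h k (by omega)).symm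
      exact (ih (by omega)).trans_lt (Submodule.finrank_lt_finrank_of_lt hlt)
  have := (hgrow _ le_rfl).trans (Submodule.finrank_le _)
  omega

theorem Monotone.iterate_bot_eq_of_finrank_le (hf : Monotone f) {N : ℕ}
    (hN : Module.finrank K V ≤ N) : f^[N] ⊥ = f^[Module.finrank K V] ⊥ := by
  obtain ⟨k, hk, hfix⟩ := hf.exists_le_finrank_iterate_bot_succ_eq
  have hstable : ∀ j, f^[j + k] ⊥ = f^[k] ⊥ := fun j => by
    rw [Function.iterate_add_apply,
      Function.iterate_fixed ((Function.iterate_succ_apply' f k ⊥).symm.trans hfix)]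
  rw [← Nat.sub_add_cancel (hk.trans hN), hstable, ← Nat.sub_add_cancel hk, hstable]

end FiniteDimensional

theorem Matrix.range_mulVecLin_conjTranspose_mul_self {m n R : Type*} [Fintype m] [Fintype n]
    [Field R] [PartialOrder R] [StarRing R] [StarOrderedRing R] (A : Matrix m n R) :
    LinearMap.range (Aᴴ * A).mulVecLin = LinearMap.range Aᴴ.mulVecLin := by
  refine Submodule.eq_of_le_of_finrank_le ?_ ?_
  · rw [Matrix.mulVecLin_mul]
    exact LinearMap.range_comp_le_range _ _
  · exact ((rank_conjTranspose_mul_self A).trans (rank_conjTranspose A).symm).ge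

theorem Matrix.range_mulVecLin_fromCols {m n₁ n₂ R : Type*} [Fintype n₁] [Fintype n₂]
    [CommSemiring R] (A₁ : Matrix m n₁ R) (A₂ : Matrix m n₂ R) :
    LinearMap.range (fromCols A₁ A₂).mulVecLin
      = LinearMap.range A₁.mulVecLin ⊔ LinearMap.range A₂.mulVecLin := by
  ext x
  simp only [Submodule.mem_sup, LinearMap.mem_range, mulVecLin_apply]
  constructor
  · rintro ⟨v, rfl⟩
    exact ⟨_, ⟨v ∘ Sum.inl, rfl⟩, _, ⟨v ∘ Sum.inr, rfl⟩, (fromCols_mulVec A₁ A₂ v).symm⟩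
  · rintro ⟨_, ⟨v₁, rfl⟩, _, ⟨v₂, rfl⟩, rfl⟩
    exact ⟨Sum.elim v₁ v₂, fromCols_mulVec_sumElim A₁ A₂ v₁ v₂⟩

section matSupp

variable {d : ℕ} {ρ σ : Matrix (Fin d) (Fin d) ℂ}

theorem Matrix.PosSemidef.exists_matSupp_eq (hρ : ρ.PosSemidef) :
    ∃ B : Matrix (Fin d) (Fin d) ℂ,
      ρ = Bᴴ * B ∧ matSupp ρ = LinearMap.range Bᴴ.mulVecLin := by
  open scoped MatrixOrder in
  obtain ⟨B, hB⟩ := CStarAlgebra.nonneg_iff_eq_star_mul_self.mp hρ.nonneg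
  refine ⟨B, hB, ?_⟩
  rw [matSupp, hB, star_eq_conjTranspose, range_mulVecLin_conjTranspose_mul_self]

@[simp]
theorem matSupp_zero : matSupp (0 : Matrix (Fin d) (Fin d) ℂ) = ⊥ := by
  simp [matSupp]

theorem matSupp_add (hρ : ρ.PosSemidef) (hσ : σ.PosSemidef) :
    matSupp (ρ + σ) = matSupp ρ ⊔ matSupp σ := by
  obtain ⟨R, rfl, hR⟩ := hρ.exists_matSupp_eq
  obtain ⟨S, rfl, hS⟩ := hσ.exists_matSupp_eq
  rw [hR, hS, ← range_mulVecLin_fromCols, ← conjTranspose_fromRows_eq_fromCols_conjTranspose,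
    ← range_mulVecLin_conjTranspose_mul_self, conjTranspose_fromRows_eq_fromCols_conjTranspose,
    fromCols_mul_fromRows, matSupp]

theorem matSupp_sum {ι : Type*} (s : Finset ι) {g : ι → Matrix (Fin d) (Fin d) ℂ}
    (hg : ∀ j ∈ s, (g j).PosSemidef) : matSupp (∑ j ∈ s, g j) = s.sup fun j => matSupp (g j) := by
  classical
  induction s using Finset.induction_on with
  | empty => simp
  | insert a s ha ih =>
    have hs : ∀ j ∈ s, (g j).PosSemidef := fun j hj => hg j (Finset.mem_insert_of_mem hj)
    rw [Finset.sum_insert ha, Finset.sup_insert, ← ih hs,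
      matSupp_add (hg a (Finset.mem_insert_self a s)) (posSemidef_sum s hs)]

theorem matSupp_mul_mul_conjTranspose (A : Matrix (Fin d) (Fin d) ℂ) (hρ : ρ.PosSemidef) :
    matSupp (A * ρ * Aᴴ) = (matSupp ρ).map A.mulVecLin := by
  obtain ⟨B, rfl, hB⟩ := hρ.exists_matSupp_eq
  have : A * (Bᴴ * B) * Aᴴ = (B * Aᴴ)ᴴ * (B * Aᴴ) := by
    simp only [conjTranspose_mul, conjTranspose_conjTranspose, Matrix.mul_assoc]
  rw [matSupp, this, range_mulVecLin_conjTranspose_mul_self, hB, conjTranspose_mul,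
    conjTranspose_conjTranspose, mulVecLin_mul, LinearMap.range_comp]

end matSupp

section krausMap

variable {n R ι : Type*} [Fintype n] [Fintype ι]

def krausMap [NonUnitalNonAssocSemiring R] [StarRing R] (A : ι → Matrix n n R) :
    Matrix n n R →+ Matrix n n R :=
  ∑ j, (AddMonoidHom.mulRight (A j)ᴴ).comp (AddMonoidHom.mulLeft (A j))

theorem krausMap_apply [NonUnitalNonAssocSemiring R] [StarRing R] (A : ι → Matrix n n R)
    (ρ : Matrix n n R) : krausMap A ρ = ∑ j, A j * ρ * (A j)ᴴ := by
  simp [krausMap]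

theorem Matrix.PosSemidef.krausMap [CommRing R] [PartialOrder R] [StarRing R] [StarOrderedRing R]
    (A : ι → Matrix n n R) {ρ : Matrix n n R} (hρ : ρ.PosSemidef) : (krausMap A ρ).PosSemidef := by
  rw [krausMap_apply]
  exact posSemidef_sum _ fun j _ => hρ.mul_mul_conjTranspose_same (A j)

end krausMap

theorem AddMonoidHom.sum_range_succ_iterate {M : Type*} [AddCommMonoid M] (f : M →+ M) (x : M)
    (N : ℕ) : ∑ i ∈ Finset.range (N + 1), f^[i] x = x + f (∑ i ∈ Finset.range N, f^[i] x) := by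
  rw [Finset.sum_range_succ', map_sum, add_comm]
  simp only [Function.iterate_succ_apply', Function.iterate_zero_apply]

section krausSupp

variable {d : ℕ} {ι : Type*} (A : ι → Matrix (Fin d) (Fin d) ℂ)

def krausSupp (X : Submodule ℂ (Fin d → ℂ)) : Submodule ℂ (Fin d → ℂ) :=
  ⨆ j, X.map (A j).mulVecLin

theorem krausSupp_mono : Monotone (krausSupp A) :=
  fun _ _ h => iSup_mono fun _ => Submodule.map_mono h

theorem matSupp_krausMap [Fintype ι] {ρ : Matrix (Fin d) (Fin d) ℂ} (hρ : ρ.PosSemidef) :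
    matSupp (krausMap A ρ) = krausSupp A (matSupp ρ) := by
  rw [krausMap_apply, matSupp_sum _ fun j _ => hρ.mul_mul_conjTranspose_same (A j),
    Finset.sup_univ_eq_iSup, krausSupp]
  exact iSup_congr fun j => matSupp_mul_mul_conjTranspose (A j) hρ

theorem matSupp_sum_range_iterate_krausMap [Fintype ι] {ρ : Matrix (Fin d) (Fin d) ℂ}
    (hρ : ρ.PosSemidef) (N : ℕ) : matSupp (∑ i ∈ Finset.range N, (krausMap A)^[i] ρ)
      = (fun X => matSupp ρ ⊔ krausSupp A X)^[N] ⊥ := by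
  induction N with
  | zero => simp
  | succ N ih =>
    have hsum := posSemidef_sum (Finset.range N) fun i _ =>
      Function.Iterate.rec PosSemidef hρ (fun _ h => h.krausMap A) i
    rw [AddMonoidHom.sum_range_succ_iterate, Function.iterate_succ_apply', ← ih,
      matSupp_add hρ (hsum.krausMap A), matSupp_krausMap A hsum]

end krausSupp

theorem sum_progF_eq_krausMap {d m n : ℕ} (E : Fin m → Fin n → Matrix (Fin d) (Fin d) ℂ)
    (M₁ : Matrix (Fin d) (Fin d) ℂ) :
    (fun ρ => ∑ k, progF E M₁ k ρ) = krausMap fun p : Fin m × Fin n => E p.1 p.2 * M₁ := by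
  funext ρ
  simp only [krausMap_apply, progF, Fintype.sum_prod_type, conjTranspose_mul, Matrix.mul_assoc]

theorem supp_chain_stabilizes_general {d m n : ℕ}
    (E : Fin m → Fin n → Matrix (Fin d) (Fin d) ℂ)
    (M₁ : Matrix (Fin d) (Fin d) ℂ)
    (ρ₀ : Matrix (Fin d) (Fin d) ℂ) (hρ₀ : ρ₀.PosSemidef) :
    ∀ N : ℕ, d - 1 ≤ N →
      matSupp (∑ i ∈ Finset.range (N + 1), (fun ρ => ∑ k, progF E M₁ k ρ)^[i] ρ₀)
        = matSupp (∑ i ∈ Finset.range (d - 1 + 1), (fun ρ => ∑ k, progF E M₁ k ρ)^[i] ρ₀) := by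
  intro N hN
  let A := fun p : Fin m × Fin n => E p.1 p.2 * M₁
  have hstep : Monotone fun X => matSupp ρ₀ ⊔ krausSupp A X :=
    fun _ _ h => sup_le_sup_left (krausSupp_mono A h) _
  have hd : Module.finrank ℂ (Fin d → ℂ) = d := Module.finrank_fin_fun ℂ
  rw [sum_progF_eq_krausMap, matSupp_sum_range_iterate_krausMap A hρ₀,
    matSupp_sum_range_iterate_krausMap A hρ₀, hstep.iterate_bot_eq_of_finrank_le (N := N + 1),
    hstep.iterate_bot_eq_of_finrank_le (N := d - 1 + 1)] <;> omega

theorem supp_chain_stabilizes {d m n : ℕ}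
    (E : Fin m → Fin n → Matrix (Fin d) (Fin d) ℂ)
    (M₀ M₁ : Matrix (Fin d) (Fin d) ℂ)
    (hE : ∀ k, ∑ i, (E k i)ᴴ * E k i = 1)
    (hM : M₀ᴴ * M₀ + M₁ᴴ * M₁ = 1)
    (ρ₀ : Matrix (Fin d) (Fin d) ℂ) (hρ₀ : ρ₀.PosSemidef) (htr : ρ₀.trace ≤ 1) :
    ∀ N : ℕ, d - 1 ≤ N →
      matSupp (∑ i ∈ Finset.range (N + 1), (fun ρ => ∑ k, progF E M₁ k ρ)^[i] ρ₀)
        = matSupp (∑ i ∈ Finset.range (d - 1 + 1), (fun ρ => ∑ k, progF E M₁ k ρ)^[i] ρ₀) :=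
  supp_chain_stabilizes_general E M₁ ρ₀ hρ₀
end

section
/- Let P = ({E_k : k ∈ K}, {M_0, M_1}) be a concurrent quantum program on ℂ^d with input a partial density operator ρ_0, and let F = ∑_{k∈K} F_k. Then the uniformly repeatedly reachable space satisfies H_URR = ⋂_{n≥0} ⋁{ supp(F_f(ρ_0)) : f ∈ K*, |f| ≥ n } = supp(∑_{i=d}^{2d−1} F^i(ρ_0)). -/
open Matrix
open scoped ComplexOrder

/-!
Only supports matter. For positive semidefinite `ρ, σ` one has `supp (A ρ Aᴴ) = A (supp ρ)` and
`supp (ρ + σ) = supp ρ ⊔ supp σ`, so `F_k` acts on supports through a join-preserving map `T_k`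
of the subspace lattice, `F` through `T = ⨆ k, T_k`, and `F_f` through the corresponding word in
the `T_k`. Joining over words of length `ℓ` gives `T^ℓ`, hence
`H_URR = ⨅ N, ⨆ ℓ ≥ N, T^ℓ S` with `S = supp ρ₀`. Both the increasing chain
`⨆ ℓ < N, T^ℓ S` and the decreasing chain `⨆ ℓ ≥ N, T^ℓ S = T^N (⨆ ℓ, T^ℓ S)` are orbits of
monotone maps, and by a dimension count both stabilise after `d` steps; therefore
`H_URR = T^d (⨆ ℓ < d, T^ℓ S) = ⨆ d ≤ i < 2d, T^i S`.
-/

namespace Matrix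

variable {𝕜 m n : Type*} [Fintype n]

theorem range_mulVecLin_mul_conjTranspose [Fintype m] [Field 𝕜] [PartialOrder 𝕜] [StarRing 𝕜]
    [StarOrderedRing 𝕜] (A : Matrix m n 𝕜) :
    LinearMap.range (A * Aᴴ).mulVecLin = LinearMap.range A.mulVecLin := by
  refine Submodule.eq_of_le_of_finrank_eq ?_ (rank_self_mul_conjTranspose A)
  rw [mulVecLin_mul]
  exact LinearMap.range_comp_le_range _ _

theorem range_fromCols_mulVecLin [CommSemiring 𝕜] {n₁ n₂ : Type*} [Fintype n₁] [Fintype n₂]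
    (A : Matrix m n₁ 𝕜) (B : Matrix m n₂ 𝕜) :
    LinearMap.range (fromCols A B).mulVecLin =
      LinearMap.range A.mulVecLin ⊔ LinearMap.range B.mulVecLin := by
  ext x
  simp only [LinearMap.mem_range, Submodule.mem_sup, mulVecLin_apply]
  constructor
  · rintro ⟨v, rfl⟩
    exact ⟨_, ⟨_, rfl⟩, _, ⟨_, rfl⟩, (fromCols_mulVec A B v).symm⟩
  · rintro ⟨_, ⟨a, rfl⟩, _, ⟨b, rfl⟩, rfl⟩
    exact ⟨Sum.elim a b, fromCols_mulVec_sumElim A B a b⟩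

namespace PosSemidef

variable [RCLike 𝕜]

theorem exists_eq_mul_conjTranspose {A : Matrix n n 𝕜} (hA : A.PosSemidef) :
    ∃ B : Matrix n n 𝕜, A = B * Bᴴ := by
  classical
  open scoped MatrixOrder in
  obtain ⟨B, rfl⟩ := CStarAlgebra.nonneg_iff_eq_star_mul_self.mp hA.nonneg
  exact ⟨Bᴴ, by rw [conjTranspose_conjTranspose, star_eq_conjTranspose]⟩

theorem range_add {A B : Matrix n n 𝕜} (hA : A.PosSemidef) (hB : B.PosSemidef) :
    LinearMap.range (A + B).mulVecLin =
      LinearMap.range A.mulVecLin ⊔ LinearMap.range B.mulVecLin := by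
  obtain ⟨C, rfl⟩ := hA.exists_eq_mul_conjTranspose
  obtain ⟨D, rfl⟩ := hB.exists_eq_mul_conjTranspose
  rw [← fromCols_mul_fromRows, ← conjTranspose_fromCols_eq_fromRows_conjTranspose,
    range_mulVecLin_mul_conjTranspose, range_fromCols_mulVecLin,
    range_mulVecLin_mul_conjTranspose, range_mulVecLin_mul_conjTranspose]

theorem range_sum {ι : Type*} (s : Finset ι) {A : ι → Matrix n n 𝕜}
    (hA : ∀ i ∈ s, (A i).PosSemidef) :
    LinearMap.range (∑ i ∈ s, A i).mulVecLin = ⨆ i ∈ s, LinearMap.range (A i).mulVecLin := by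
  classical
  induction s using Finset.induction_on with
  | empty => simp
  | insert a s ha ih =>
    rw [Finset.sum_insert ha, Finset.iSup_insert,
      range_add (hA a (s.mem_insert_self a))
        (posSemidef_sum s fun i hi ↦ hA i (s.mem_insert_of_mem hi)),
      ih fun i hi ↦ hA i (s.mem_insert_of_mem hi)]

theorem range_mul_mul_conjTranspose [Fintype m] {A : Matrix n n 𝕜} (hA : A.PosSemidef)
    (C : Matrix m n 𝕜) :
    LinearMap.range (C * A * Cᴴ).mulVecLin = (LinearMap.range A.mulVecLin).map C.mulVecLin := by
  obtain ⟨B, rfl⟩ := hA.exists_eq_mul_conjTranspose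
  rw [show C * (B * Bᴴ) * Cᴴ = C * B * (C * B)ᴴ by simp [Matrix.mul_assoc],
    range_mulVecLin_mul_conjTranspose, range_mulVecLin_mul_conjTranspose, mulVecLin_mul,
    LinearMap.range_comp]

end PosSemidef

end Matrix

open Function

section FixedPoint

variable {α : Type*} [PartialOrder α] {g : α → α} {x : α}

/-- An orbit that repeats a value is constant from then on, and along an increasing orbit
a strictly monotone height bounded by `n` can increase at most `n` times. -/
theorem Monotone.isFixedPt_iterate_of_le_map (hg : Monotone g) (hx : x ≤ g x) {h : α → ℕ}
    (hh : StrictMono h) {n : ℕ} (hn : ∀ a, h a ≤ n) : IsFixedPt g (g^[n] x) := by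
  have hchain := hg.monotone_iterate_of_le_map hx
  have hgrowth : ∀ N, g^[N + 1] x ≠ g^[N] x → N + 1 ≤ h (g^[N + 1] x) := by
    intro N
    induction N with
    | zero =>
      intro hne
      have hstep : h x < h (g x) := hh (lt_of_le_of_ne hx (Ne.symm hne))
      simp only [zero_add, iterate_one]
      omega
    | succ N ih =>
      intro hne
      have hprev : g^[N + 1] x ≠ g^[N] x := fun heq ↦
        hne (by simpa only [iterate_succ_apply'] using congrArg g heq)
      have hlt : g^[N + 1] x < g^[N + 1 + 1] x :=
        lt_of_le_of_ne (hchain (Nat.le_succ _)) (Ne.symm hne)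
      have hstep := hh hlt
      have hprev_bound := ih hprev
      omega
  by_contra hne
  have hlower := hgrowth n (by rwa [iterate_succ_apply'])
  have hupper := hn (g^[n + 1] x)
  omega

theorem Monotone.iterate_le_iterate_of_le_map (hg : Monotone g) (hx : x ≤ g x) {h : α → ℕ}
    (hh : StrictMono h) {n : ℕ} (hn : ∀ a, h a ≤ n) (N : ℕ) : g^[N] x ≤ g^[n] x :=
  calc g^[N] x ≤ g^[N + n] x := hg.monotone_iterate_of_le_map hx (Nat.le_add_right N n)
    _ = g^[n] x := by
      rw [iterate_add_apply, ((hg.isFixedPt_iterate_of_le_map hx hh hn).iterate N).eq]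

end FixedPoint


namespace sSupHom

variable {α β ι : Type*} [CompleteLattice α] [CompleteLattice β]

def pointwiseSup (T : ι → sSupHom α β) : sSupHom α β where
  toFun a := ⨆ k, T k a
  map_sSup' s := by
    simp only [sSupHomClass.map_sSup, sSup_image]
    exact iSup_comm.trans (iSup_congr fun _ ↦ iSup_comm)

@[simp]
theorem pointwiseSup_apply (T : ι → sSupHom α β) (a : α) : pointwiseSup T a = ⨆ k, T k a :=
  rfl

theorem iterate_map_iSup (T : sSupHom α α) (n : ℕ) {κ : Sort*} (f : κ → α) :
    T^[n] (⨆ i, f i) = ⨆ i, T^[n] (f i) := by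
  induction n with
  | zero => rfl
  | succ n ih => simp only [iterate_succ_apply', ih, map_iSup]

theorem iterate_sup_map_bot (T : sSupHom α α) (a : α) (N : ℕ) :
    (fun b ↦ a ⊔ T b)^[N] ⊥ = ⨆ ℓ < N, T^[ℓ] a := by
  induction N with
  | zero => simp
  | succ N ih =>
    simp only [iterate_succ_apply', ih, map_iSup₂, Nat.iSup_lt_succ', iterate_zero_apply]

variable (T : ι → sSupHom α α)

theorem foldl_le_iterate_pointwiseSup (f : List ι) (a : α) :
    f.foldl (fun b k ↦ T k b) a ≤ (pointwiseSup T)^[f.length] a := by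
  induction f generalizing a with
  | nil => exact le_rfl
  | cons k f ih =>
    calc (k :: f).foldl (fun b k ↦ T k b) a = f.foldl (fun b k ↦ T k b) (T k a) := rfl
      _ ≤ (pointwiseSup T)^[f.length] (T k a) := ih _
      _ ≤ (pointwiseSup T)^[f.length] (pointwiseSup T a) :=
        (OrderHomClass.mono _).iterate _ (le_iSup (fun k ↦ T k a) k)
      _ = (pointwiseSup T)^[(k :: f).length] a := (iterate_succ_apply _ _ _).symm

theorem iterate_pointwiseSup_le_iSup_foldl (ℓ : ℕ) (a : α) :
    (pointwiseSup T)^[ℓ] a ≤ ⨆ f : List ι, ⨆ _ : f.length = ℓ, f.foldl (fun b k ↦ T k b) a := by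
  induction ℓ generalizing a with
  | zero => exact le_iSup₂_of_le [] rfl le_rfl
  | succ ℓ ih =>
    rw [iterate_succ_apply, pointwiseSup_apply, iterate_map_iSup]
    refine iSup_le fun k ↦ (ih (T k a)).trans (iSup₂_le fun f hf ↦ ?_)
    exact le_iSup₂_of_le (k :: f) (by simp [hf]) le_rfl

theorem iSup_foldl_eq_iSup_iterate_pointwiseSup (N : ℕ) (a : α) :
    ⨆ f : List ι, ⨆ _ : N ≤ f.length, f.foldl (fun b k ↦ T k b) a =
      ⨆ ℓ ≥ N, (pointwiseSup T)^[ℓ] a :=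
  le_antisymm
    (iSup₂_le fun f hf ↦
      (foldl_le_iterate_pointwiseSup T f a).trans (le_iSup₂_of_le f.length hf le_rfl))
    (iSup₂_le fun ℓ hℓ ↦ (iterate_pointwiseSup_le_iSup_foldl T ℓ a).trans
      (iSup₂_mono' fun f hf ↦ ⟨f, hf ▸ hℓ, le_rfl⟩))

end sSupHom

namespace Submodule

def mapSSupHom {R M M₂ : Type*} [Semiring R] [AddCommMonoid M] [AddCommMonoid M₂]
    [Module R M] [Module R M₂] (f : M →ₗ[R] M₂) :
    sSupHom (Submodule R M) (Submodule R M₂) where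
  toFun := map f
  map_sSup' _ := by rw [(gc_map_comap f).l_sSup, sSup_image]

variable {K V : Type*} [DivisionRing K] [AddCommGroup V] [Module K V] [FiniteDimensional K V]

section Iterate

variable {g : Submodule K V → Submodule K V} {W : Submodule K V}

theorem iterate_le_iterate_finrank_of_le_map (hg : Monotone g) (hW : W ≤ g W) (N : ℕ) :
    g^[N] W ≤ g^[Module.finrank K V] W :=
  hg.iterate_le_iterate_of_le_map hW (fun _ _ ↦ finrank_lt_finrank_of_lt) finrank_le N

theorem iterate_finrank_le_iterate_of_map_le (hg : Monotone g) (hW : g W ≤ W) (N : ℕ) :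
    g^[Module.finrank K V] W ≤ g^[N] W :=
  hg.dual.iterate_le_iterate_of_le_map (α := (Submodule K V)ᵒᵈ) hW
    (h := fun U ↦ Module.finrank K V - Module.finrank K (OrderDual.ofDual U : Submodule K V))
    (fun U U' hUU' ↦ by
      have hlt := finrank_lt_finrank_of_lt (OrderDual.ofDual_lt_ofDual.mpr hUU')
      have hle := finrank_le (OrderDual.ofDual U)
      dsimp only
      omega)
    (fun _ ↦ Nat.sub_le _ _) N

end Iterate

variable (T : sSupHom (Submodule K V) (Submodule K V)) (S : Submodule K V)

theorem iSup_iterate_eq_iSup_lt_finrank :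
    ⨆ ℓ, T^[ℓ] S = ⨆ ℓ < Module.finrank K V, T^[ℓ] S := by
  refine le_antisymm (iSup_le fun ℓ ↦ ?_) (iSup₂_le fun ℓ _ ↦ le_iSup (fun ℓ ↦ T^[ℓ] S) ℓ)
  have hg : Monotone fun W ↦ S ⊔ T W := fun _ _ h ↦ sup_le_sup_left (OrderHomClass.mono T h) _
  calc T^[ℓ] S ≤ (fun W ↦ S ⊔ T W)^[ℓ + 1] ⊥ := by
        rw [sSupHom.iterate_sup_map_bot]; exact le_iSup₂_of_le ℓ (Nat.lt_succ_self ℓ) le_rfl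
    _ ≤ (fun W ↦ S ⊔ T W)^[Module.finrank K V] ⊥ :=
        iterate_le_iterate_finrank_of_le_map hg bot_le _
    _ = _ := sSupHom.iterate_sup_map_bot T S _

theorem iInf_iSup_iterate_eq :
    ⨅ N, ⨆ ℓ ≥ N, T^[ℓ] S =
      ⨆ i ∈ Finset.Ico (Module.finrank K V) (2 * Module.finrank K V), T^[i] S := by
  set n := Module.finrank K V with hn
  have htail : ∀ N, ⨆ ℓ ≥ N, T^[ℓ] S = T^[N] (⨆ ℓ, T^[ℓ] S) := fun N ↦ by
    simp only [iSup_ge_eq_iSup_nat_add, sSupHom.iterate_map_iSup, ← iterate_add_apply, add_comm]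
  have hinvariant : T (⨆ ℓ, T^[ℓ] S) ≤ ⨆ ℓ, T^[ℓ] S := by
    rw [_root_.map_iSup]
    exact iSup_le fun ℓ ↦ le_iSup_of_le (ℓ + 1) (iterate_succ_apply' _ _ _).ge
  calc ⨅ N, ⨆ ℓ ≥ N, T^[ℓ] S = T^[n] (⨆ ℓ, T^[ℓ] S) := by
        simp only [htail]
        exact le_antisymm (iInf_le _ n)
          (le_iInf (iterate_finrank_le_iterate_of_map_le (OrderHomClass.mono T) hinvariant))
    _ = ⨆ ℓ < n, T^[n + ℓ] S := by
        rw [iSup_iterate_eq_iSup_lt_finrank, ← hn]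
        simp only [sSupHom.iterate_map_iSup, ← iterate_add_apply]
    _ = ⨆ i ∈ Finset.Ico n (2 * n), T^[i] S := by
        refine le_antisymm (iSup₂_le fun ℓ hℓ ↦ le_iSup₂_of_le (n + ℓ) ?_ le_rfl)
          (iSup₂_le fun i hi ↦ le_iSup₂_of_le (i - n) ?_ ?_)
        · simp only [Finset.mem_Ico]; omega
        · simp only [Finset.mem_Ico] at hi; omega
        · simp only [Finset.mem_Ico] at hi; rw [Nat.add_sub_cancel' hi.1]

end Submodule

section ConcurrentProgram

variable {d m n : ℕ} (E : Fin m → Fin n → Matrix (Fin d) (Fin d) ℂ)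
  (M₁ : Matrix (Fin d) (Fin d) ℂ)

noncomputable def progFSum (ρ : Matrix (Fin d) (Fin d) ℂ) : Matrix (Fin d) (Fin d) ℂ :=
  ∑ k, progF E M₁ k ρ

noncomputable def progFSupp (k : Fin m) :
    sSupHom (Submodule ℂ (Fin d → ℂ)) (Submodule ℂ (Fin d → ℂ)) :=
  sSupHom.pointwiseSup fun i ↦
    (Submodule.mapSSupHom (E k i).mulVecLin).comp (Submodule.mapSSupHom M₁.mulVecLin)

variable {ρ : Matrix (Fin d) (Fin d) ℂ}

theorem progF_posSemidef (k : Fin m) (hρ : ρ.PosSemidef) : (progF E M₁ k ρ).PosSemidef :=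
  posSemidef_sum _ fun _ _ ↦ (hρ.mul_mul_conjTranspose_same M₁).mul_mul_conjTranspose_same _

theorem progFSum_posSemidef (hρ : ρ.PosSemidef) : (progFSum E M₁ ρ).PosSemidef :=
  posSemidef_sum _ fun k _ ↦ progF_posSemidef E M₁ k hρ

theorem iterate_progFSum_posSemidef (N : ℕ) (hρ : ρ.PosSemidef) :
    ((progFSum E M₁)^[N] ρ).PosSemidef :=
  Function.Iterate.rec _ hρ (fun _ ↦ progFSum_posSemidef E M₁) N

theorem matSupp_progF (k : Fin m) (hρ : ρ.PosSemidef) :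
    matSupp (progF E M₁ k ρ) = progFSupp E M₁ k (matSupp ρ) := by
  have hM₁ := hρ.mul_mul_conjTranspose_same M₁
  rw [matSupp, progF, PosSemidef.range_sum _ fun i _ ↦ hM₁.mul_mul_conjTranspose_same (E k i)]
  simp only [Finset.mem_univ, iSup_pos, hM₁.range_mul_mul_conjTranspose,
    hρ.range_mul_mul_conjTranspose]
  rfl

theorem matSupp_progFStr (f : List (Fin m)) (hρ : ρ.PosSemidef) :
    matSupp (progFStr E M₁ f ρ) = f.foldl (fun W k ↦ progFSupp E M₁ k W) (matSupp ρ) := by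
  induction f generalizing ρ with
  | nil => rfl
  | cons k f ih =>
    rw [progFStr, ih (progF_posSemidef E M₁ k hρ), matSupp_progF E M₁ k hρ]
    rfl

theorem matSupp_iterate_progFSum (N : ℕ) (hρ : ρ.PosSemidef) :
    matSupp ((progFSum E M₁)^[N] ρ) =
      (sSupHom.pointwiseSup (progFSupp E M₁))^[N] (matSupp ρ) := by
  induction N generalizing ρ with
  | zero => rfl
  | succ N ih =>
    rw [Function.iterate_succ_apply, Function.iterate_succ_apply,
      ih (progFSum_posSemidef E M₁ hρ), progFSum, matSupp,
      PosSemidef.range_sum _ fun k _ ↦ progF_posSemidef E M₁ k hρ]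
    simp only [Finset.mem_univ, iSup_pos, sSupHom.pointwiseSup_apply]
    exact congrArg _ (iSup_congr fun k ↦ matSupp_progF E M₁ k hρ)

end ConcurrentProgram

theorem uniformly_repeatedly_reachable_space_eq_general {d m n : ℕ}
    (E : Fin m → Fin n → Matrix (Fin d) (Fin d) ℂ)
    (M₁ : Matrix (Fin d) (Fin d) ℂ)
    (ρ₀ : Matrix (Fin d) (Fin d) ℂ) (hρ₀ : ρ₀.PosSemidef) :
    (⨅ N : ℕ, ⨆ f : List (Fin m), ⨆ _ : N ≤ f.length, matSupp (progFStr E M₁ f ρ₀))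
      = matSupp (∑ i ∈ Finset.Ico d (2 * d), (fun ρ => ∑ k, progF E M₁ k ρ)^[i] ρ₀) := by
  change _ = LinearMap.range (∑ i ∈ Finset.Ico d (2 * d), (progFSum E M₁)^[i] ρ₀).mulVecLin
  rw [PosSemidef.range_sum _ fun i _ ↦ iterate_progFSum_posSemidef E M₁ i hρ₀]
  simp only [matSupp_progFStr E M₁ _ hρ₀, sSupHom.iSup_foldl_eq_iSup_iterate_pointwiseSup,
    Submodule.iInf_iSup_iterate_eq, Module.finrank_fin_fun]
  exact iSup_congr fun i ↦ iSup_congr fun _ ↦ (matSupp_iterate_progFSum E M₁ i hρ₀).symm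

theorem uniformly_repeatedly_reachable_space_eq {d m n : ℕ}
    (E : Fin m → Fin n → Matrix (Fin d) (Fin d) ℂ)
    (M₀ M₁ : Matrix (Fin d) (Fin d) ℂ)
    (hE : ∀ k, ∑ i, (E k i)ᴴ * E k i = 1)
    (hM : M₀ᴴ * M₀ + M₁ᴴ * M₁ = 1)
    (ρ₀ : Matrix (Fin d) (Fin d) ℂ) (hρ₀ : ρ₀.PosSemidef) (htr : ρ₀.trace ≤ 1) :
    (⨅ N : ℕ, ⨆ f : List (Fin m), ⨆ _ : N ≤ f.length, matSupp (progFStr E M₁ f ρ₀))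
      = matSupp (∑ i ∈ Finset.Ico d (2 * d), (fun ρ => ∑ k, progF E M₁ k ρ)^[i] ρ₀) :=
  uniformly_repeatedly_reachable_space_eq_general E M₁ ρ₀ hρ₀
end
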